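/- In the FLAG setting, assume additionally that δ ≤ 1/d, and set q_T := Σ_{i=1}^d s_T(i). Then for every u ∈ C: F(y_{T+1}) − F(u) ≤ 2001·q_T²·L·D/T³. In particular, since √T ≤ q_T ≤ √(d·T), the bound is at most 2001·L·D·d/T². -/

import Mathlib

/-!
With the weights `A_k = η_k² L_k`, the step-size recursion says exactly that
`A_k = A_{k-1} + η_k` (with `A_0 = 0`), i.e. `η_k (η_k L_k - 1) = A_{k-1}`. Multiplying the
proximal-gradient inequality at `u` by `η_k` and at `y_k` by `A_{k-1}`, and using the
binary-search guarantee and the mirror-descent inequality for `z`, gives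
`A_k (F(y_{k+1}) - F(u)) ≤ A_{k-1} (F(y_k) - F(u)) + (D L / T³) A_k + Ψ_k(z_k) - Ψ_k(z_{k+1})`,
where `Ψ_k(z) = ½ ‖u - z‖²_{S_k}`. The metrics `S_k` only grow, so the potentials telescope up to
`½ D tr S_T ≤ ½ D (q_T + 1)`. On the other hand `√A_k - √A_{k-1} ≥ 1 / (2 √L_k)`, so
Cauchy–Schwarz gives `T³ ≤ 4 (∑ L_k) A_T`, while the AdaGrad inequality bounds
`∑ L_k ≤ 2 L q_T`. Hence `F(y_{T+1}) - F(u) ≤ 9 q_T² L D / T³`.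
-/

open scoped RealInnerProductSpace
open Filter Topology AffineMap Finset

section InnerProductSpace

variable {E : Type*} [NormedAddCommGroup E] [InnerProductSpace ℝ E] [CompleteSpace E]

theorem HasGradientAt.hasDerivAt_lineMap {f : E → ℝ} {g a b : E} {t : ℝ}
    (hf : HasGradientAt f g (lineMap a b t)) :
    HasDerivAt (fun τ => f (lineMap a b τ)) ⟪g, b - a⟫ t := by
  have h := hf.hasFDerivAt.comp_hasDerivAt t AffineMap.hasDerivAt_lineMap
  rw [InnerProductSpace.toDual_apply_apply] at h
  exact h

theorem ConvexOn.add_inner_gradient_le {C : Set E} {f : E → ℝ} {g a b : E}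
    (hf : ConvexOn ℝ C f) (ha : a ∈ C) (hb : b ∈ C) (hg : HasGradientAt f g a) :
    f a + ⟪g, b - a⟫ ≤ f b := by
  have hline : ConvexOn ℝ (lineMap a b ⁻¹' C) (f ∘ lineMap a b) := hf.comp_affineMap _
  have := hline.le_slope_of_hasDerivAt (by simpa using ha) (by simpa using hb) one_pos
    (HasGradientAt.hasDerivAt_lineMap (by simpa using hg))
  simp only [slope_def_field, Function.comp_apply, lineMap_apply_one, lineMap_apply_zero,
    sub_zero, div_one] at this
  linarith

theorem le_add_inner_add_sq_of_lipschitzOn_gradient {C : Set E} {f : E → ℝ} {f' : E → E}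
    {L : ℝ} (hC : Convex ℝ C) (hf : ∀ v, HasGradientAt f (f' v) v)
    (hLip : ∀ a ∈ C, ∀ b ∈ C, ‖f' a - f' b‖ ≤ L * ‖a - b‖) {a b : E} (ha : a ∈ C)
    (hb : b ∈ C) :
    f b ≤ f a + ⟪f' a, b - a⟫ + L / 2 * ‖b - a‖ ^ 2 := by
  set γ : ℝ → ℝ := fun t => f (lineMap a b t) - t * ⟪f' a, b - a⟫ - L / 2 * t ^ 2 * ‖b - a‖ ^ 2
  have hγ : ∀ t, HasDerivAt γ (⟪f' (lineMap a b t) - f' a, b - a⟫ - L * t * ‖b - a‖ ^ 2) t := by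
    intro t
    have := (((hf (lineMap a b t)).hasDerivAt_lineMap).sub ((hasDerivAt_id t).mul_const
      ⟪f' a, b - a⟫)).sub (((hasDerivAt_pow 2 t).const_mul (L / 2)).mul_const (‖b - a‖ ^ 2))
    exact this.congr_deriv (by rw [inner_sub_left]; ring)
  have hanti : AntitoneOn γ (Set.Icc 0 1) := by
    refine antitoneOn_of_deriv_nonpos (convex_Icc 0 1)
      (fun t _ => (hγ t).continuousAt.continuousWithinAt)
      (fun t _ => (hγ t).differentiableAt.differentiableWithinAt) fun t ht => ?_
    rw [interior_Icc] at ht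
    have hmem : lineMap a b t ∈ C := hC.lineMap_mem ha hb ⟨ht.1.le, ht.2.le⟩
    have hdist : ‖lineMap a b t - a‖ = t * ‖b - a‖ := by
      rw [lineMap_apply_module', add_sub_cancel_right, norm_smul, Real.norm_of_nonneg ht.1.le]
    calc deriv γ t = ⟪f' (lineMap a b t) - f' a, b - a⟫ - L * t * ‖b - a‖ ^ 2 := (hγ t).deriv
      _ ≤ ‖f' (lineMap a b t) - f' a‖ * ‖b - a‖ - L * t * ‖b - a‖ ^ 2 := by
          gcongr; exact real_inner_le_norm _ _
      _ ≤ L * (t * ‖b - a‖) * ‖b - a‖ - L * t * ‖b - a‖ ^ 2 := by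
          gcongr; rw [← hdist]; exact hLip _ hmem _ ha
      _ = 0 := by ring
  have := hanti ⟨le_rfl, zero_le_one⟩ ⟨zero_le_one, le_rfl⟩ zero_le_one
  simp only [γ, lineMap_apply_zero, lineMap_apply_one] at this
  nlinarith

end InnerProductSpace

theorem IsMinOn.add_le_of_segment {E : Type*} [AddCommGroup E] [Module ℝ E] {C : Set E}
    {φ : E → ℝ} {m w : E} {R : ℝ} (hC : Convex ℝ C) (hmin : IsMinOn φ C m) (hm : m ∈ C)
    (hw : w ∈ C)
    (hseg : ∀ t ∈ Set.Ioc (0 : ℝ) 1,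
      φ ((1 - t) • m + t • w) ≤ (1 - t) * φ m + t * φ w - t * (1 - t) * R) :
    φ m + R ≤ φ w := by
  have hsmall : ∀ t ∈ Set.Ioc (0 : ℝ) 1, φ m + R - φ w ≤ t * R := by
    intro t ht
    have := (hmin (hC hm hw (by linarith [ht.2]) ht.1.le (by ring))).trans (hseg t ht)
    nlinarith [ht.1]
  have hlim : Tendsto (fun t : ℝ => t * R) (𝓝[>] 0) (𝓝 0) := by
    simpa using (continuous_mul_const R).continuousWithinAt.tendsto (x := 0) (s := Set.Ioi 0)
  have := ge_of_tendsto hlim (eventually_of_mem (Ioc_mem_nhdsGT one_pos) hsmall)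
  linarith

section DiagonalMetric

variable {ι : Type*} [Fintype ι]

theorem sum_weighted_sq_convex_combination (c : ι → ℝ) (a b z : EuclideanSpace ℝ ι) (t : ℝ) :
    ∑ i, c i * (((1 - t) • a + t • b) i - z i) ^ 2
      = (1 - t) * ∑ i, c i * (a i - z i) ^ 2 + t * ∑ i, c i * (b i - z i) ^ 2
        - t * (1 - t) * ∑ i, c i * (b i - a i) ^ 2 := by
  simp only [PiLp.add_apply, PiLp.smul_apply, smul_eq_mul, mul_sum, ← sum_add_distrib,
    ← sum_sub_distrib]
  exact sum_congr rfl fun i _ => by ring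

theorem three_point_weighted {C : Set (EuclideanSpace ℝ ι)} {ψ : EuclideanSpace ℝ ι → ℝ}
    (hC : Convex ℝ C) (hψ : ConvexOn ℝ C ψ) (c : ι → ℝ) {z m w : EuclideanSpace ℝ ι}
    (hm : m ∈ C) (hw : w ∈ C)
    (hmin : ∀ v ∈ C, ψ m + 1 / 2 * ∑ i, c i * (m i - z i) ^ 2
      ≤ ψ v + 1 / 2 * ∑ i, c i * (v i - z i) ^ 2) :
    ψ m + 1 / 2 * ∑ i, c i * (m i - z i) ^ 2 + 1 / 2 * ∑ i, c i * (w i - m i) ^ 2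
      ≤ ψ w + 1 / 2 * ∑ i, c i * (w i - z i) ^ 2 := by
  refine IsMinOn.add_le_of_segment (φ := fun v => ψ v + 1 / 2 * ∑ i, c i * (v i - z i) ^ 2)
    hC hmin hm hw fun t ht => ?_
  have hψt : ψ ((1 - t) • m + t • w) ≤ (1 - t) * ψ m + t * ψ w :=
    hψ.2 hm hw (by linarith [ht.2]) ht.1.le (by ring)
  rw [sum_weighted_sq_convex_combination]
  nlinarith

theorem half_mul_norm_sub_sq_eq_sum (L : ℝ) (a b : EuclideanSpace ℝ ι) :
    L / 2 * ‖a - b‖ ^ 2 = 1 / 2 * ∑ i, L * (a i - b i) ^ 2 := by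
  simp only [EuclideanSpace.real_norm_sq_eq, PiLp.sub_apply, ← mul_sum]
  ring

theorem convexOn_inner_sub {C : Set (EuclideanSpace ℝ ι)} (hC : Convex ℝ C)
    (g x : EuclideanSpace ℝ ι) : ConvexOn ℝ C fun w => ⟪g, w - x⟫ := by
  refine ⟨hC, fun a _ b _ s t _ _ hst => le_of_eq ?_⟩
  simp only [inner_sub_right, inner_add_right, real_inner_smul_right, smul_eq_mul]
  linear_combination ⟪g, x⟫ * hst

theorem prox_grad_step_le {C : Set (EuclideanSpace ℝ ι)} (hC : Convex ℝ C)
    {f h : EuclideanSpace ℝ ι → ℝ} {f' : EuclideanSpace ℝ ι → EuclideanSpace ℝ ι} {L : ℝ}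
    (hf : ConvexOn ℝ C f) (hh : ConvexOn ℝ C h) (hfg : ∀ v, HasGradientAt f (f' v) v)
    (hLip : ∀ a ∈ C, ∀ b ∈ C, ‖f' a - f' b‖ ≤ L * ‖a - b‖) (hL : 0 < L)
    {x y p w : EuclideanSpace ℝ ι} (hx : x ∈ C) (hy : y ∈ C) (hw : w ∈ C)
    (hprox : ∀ v ∈ C, h y + ⟪f' x, y - x⟫ + L / 2 * ‖y - x‖ ^ 2
      ≤ h v + ⟪f' x, v - x⟫ + L / 2 * ‖v - x‖ ^ 2)
    (hp : p = -L • (y - x)) :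
    f y + h y ≤ f w + h w - ⟪p, w - x⟫ - ‖p‖ ^ 2 / (2 * L) := by
  have hdescent := le_add_inner_add_sq_of_lipschitzOn_gradient hC hfg hLip hx hy
  have hgrad := hf.add_inner_gradient_le hx hw (hfg x)
  have hthree := three_point_weighted hC (hh.add (convexOn_inner_sub hC (f' x) x))
    (fun _ => L) hy hw (z := x)
    (by simpa only [Pi.add_apply, half_mul_norm_sub_sq_eq_sum] using hprox)
  simp only [Pi.add_apply, ← half_mul_norm_sub_sq_eq_sum] at hthree
  have hpoly : ‖w - x‖ ^ 2 = ‖w - y‖ ^ 2 + 2 * ⟪y - x, w - x⟫ - ‖y - x‖ ^ 2 := by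
    have := norm_sub_sq_real (w - x) (y - x)
    rw [sub_sub_sub_cancel_right, real_inner_comm] at this
    linarith
  have hpw : ⟪p, w - x⟫ = -L * ⟪y - x, w - x⟫ := by rw [hp, real_inner_smul_left]
  have hpn : ‖p‖ ^ 2 / (2 * L) = L / 2 * ‖y - x‖ ^ 2 := by
    rw [hp, norm_smul, mul_pow, norm_neg, Real.norm_of_nonneg hL.le]
    field_simp
  rw [hpw, hpn]
  nlinarith

theorem inner_le_half_sum_sq_div_add (c : ι → ℝ) (hc : ∀ i, 0 < c i)
    (v a : EuclideanSpace ℝ ι) :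
    ⟪v, a⟫ ≤ 1 / 2 * ∑ i, v i ^ 2 / c i + 1 / 2 * ∑ i, c i * a i ^ 2 := by
  simp only [PiLp.inner_apply, RCLike.inner_apply, conj_trivial, mul_sum, ← sum_add_distrib]
  refine sum_le_sum fun i _ => ?_
  have hci := hc i
  have : v i ^ 2 / c i + c i * a i ^ 2 - 2 * (a i * v i) = (v i - c i * a i) ^ 2 / c i := by
    field_simp; ring
  nlinarith [div_nonneg (sq_nonneg (v i - c i * a i)) hci.le]

theorem mirror_step_le {C : Set (EuclideanSpace ℝ ι)} (hC : Convex ℝ C) (c : ι → ℝ)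
    (hc : ∀ i, 0 < c i) {v z z' u : EuclideanSpace ℝ ι} (hz' : z' ∈ C) (hu : u ∈ C)
    (hmin : ∀ w ∈ C, ⟪v, z' - z⟫ + 1 / 2 * ∑ i, c i * (z' i - z i) ^ 2
      ≤ ⟪v, w - z⟫ + 1 / 2 * ∑ i, c i * (w i - z i) ^ 2) :
    ⟪v, z - u⟫ ≤ 1 / 2 * ∑ i, v i ^ 2 / c i + 1 / 2 * ∑ i, c i * (u i - z i) ^ 2
      - 1 / 2 * ∑ i, c i * (u i - z' i) ^ 2 := by
  have hthree := three_point_weighted hC (convexOn_inner_sub hC v z) c hz' hu hmin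
  have hamgm := inner_le_half_sum_sq_div_add c hc v (z - z')
  simp only [PiLp.sub_apply] at hamgm
  have hsymm : ∑ i, c i * (z i - z' i) ^ 2 = ∑ i, c i * (z' i - z i) ^ 2 :=
    sum_congr rfl fun i _ => by ring
  simp only [inner_sub_right] at hthree hamgm ⊢
  linarith

theorem sum_sq_inv_norm_smul_eq_one {p : EuclideanSpace ℝ ι} (hp : p ≠ 0) :
    ∑ i, (‖p‖⁻¹ • p) i ^ 2 = 1 := by
  rw [← EuclideanSpace.real_norm_sq_eq, norm_smul, norm_inv, norm_norm,
    inv_mul_cancel₀ (norm_ne_zero_iff.mpr hp), one_pow]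

theorem sum_sq_smul_div_eq {p : EuclideanSpace ℝ ι} (hp : p ≠ 0) (η : ℝ) (c : ι → ℝ) :
    ∑ i, (η • p) i ^ 2 / c i = η ^ 2 * ‖p‖ ^ 2 * ∑ i, (‖p‖⁻¹ • p) i ^ 2 / c i := by
  have hn : ‖p‖ ≠ 0 := norm_ne_zero_iff.mpr hp
  rw [mul_sum]
  refine sum_congr rfl fun i _ => ?_
  simp only [PiLp.smul_apply, smul_eq_mul]
  field_simp

theorem sum_sq_div_pos {g c : ι → ℝ} (hc : ∀ i, 0 < c i) (hg : ∑ i, g i ^ 2 = 1) :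
    0 < ∑ i, g i ^ 2 / c i := by
  obtain ⟨i, -, hi⟩ := exists_ne_zero_of_sum_ne_zero (hg.trans_ne one_ne_zero)
  exact sum_pos' (fun j _ => div_nonneg (sq_nonneg _) (hc j).le)
    ⟨i, mem_univ i, div_pos (lt_of_le_of_ne (sq_nonneg _) hi.symm) (hc i)⟩

theorem sum_mul_sub_sum_mul_le {c c' a : ι → ℝ} {D : ℝ} (hc : ∀ i, c i ≤ c' i)
    (ha : ∀ i, a i ≤ D) : ∑ i, c' i * a i - ∑ i, c i * a i ≤ D * ∑ i, c' i - D * ∑ i, c i := by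
  simp only [← sum_sub_distrib, mul_sum, ← mul_sub, ← sub_mul]
  exact sum_le_sum fun i _ => by nlinarith [hc i, ha i]

end DiagonalMetric

theorem weighted_gap_step {E : Type*} [NormedAddCommGroup E] [InnerProductSpace ℝ E]
    {F : E → ℝ} {x y y' z u p : E} {L η ℓ ε Ψ Ψ' : ℝ} (hη : 0 < η) (hηℓ : 1 ≤ η * ℓ)
    (hprox_u : F y' ≤ F u - ⟪p, u - x⟫ - ‖p‖ ^ 2 / (2 * L))
    (hprox_y : F y' ≤ F y - ⟪p, y - x⟫ - ‖p‖ ^ 2 / (2 * L))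
    (hmirror : η * ⟪p, z - u⟫ ≤ η ^ 2 * ℓ * (‖p‖ ^ 2 / (2 * L)) + Ψ - Ψ')
    (hbs : ⟪p, x - z⟫ ≤ (η * ℓ - 1) * ⟪p, y - x⟫ + ε * (η * ℓ)) :
    η ^ 2 * ℓ * (F y' - F u) ≤ η * (η * ℓ - 1) * (F y - F u) + ε * (η ^ 2 * ℓ) + Ψ - Ψ' := by
  have hsplit : ⟪p, u - x⟫ = -⟪p, x - z⟫ - ⟪p, z - u⟫ := by
    simp only [inner_sub_right]; ring
  rw [hsplit] at hprox_u
  linear_combination η * hprox_u + η * (η * ℓ - 1) * hprox_y + hmirror + η * hbs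

theorem potential_telescope {T : ℕ} (hT : 1 ≤ T) {a a' E Φ Φ' B : ℕ → ℝ} {ε : ℝ}
    (ha'_one : a' 1 = 0) (ha'_succ : ∀ k, 1 ≤ k → k < T → a' (k + 1) = a k)
    (hstep : ∀ k, 1 ≤ k → k ≤ T → a k * E k ≤ a' k * E (k - 1) + ε * a k + Φ k - Φ' k)
    (hΦ_one : Φ 1 ≤ B 1)
    (hbridge : ∀ k, 1 ≤ k → k < T → Φ (k + 1) - Φ' k ≤ B (k + 1) - B k) :
    a T * E T + Φ' T ≤ ε * ∑ k ∈ Icc 1 T, a k + B T := by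
  induction T, hT using Nat.le_induction with
  | base =>
    have hs := hstep 1 le_rfl le_rfl
    rw [ha'_one, zero_mul, zero_add] at hs
    simp only [Icc_self, sum_singleton]
    linarith
  | succ T hT ih =>
    have ih := ih (fun k h1 _ => ha'_succ k h1 (by omega)) (fun k h1 _ => hstep k h1 (by omega))
      (fun k h1 _ => hbridge k h1 (by omega))
    have hs := hstep (T + 1) (by omega) le_rfl
    rw [ha'_succ T hT (by omega), Nat.add_sub_cancel] at hs
    rw [sum_Icc_succ_top (by omega)]
    linarith [hbridge T hT (by omega)]

theorem sum_Icc_le_card_mul_of_le_succ {a : ℕ → ℝ} {T : ℕ}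
    (h : ∀ k, 1 ≤ k → k < T → a k ≤ a (k + 1)) : ∑ k ∈ Icc 1 T, a k ≤ T * a T := by
  induction T with
  | zero => simp
  | succ T ih =>
    rw [sum_Icc_succ_top (by omega), Nat.cast_succ]
    have ih := ih fun k h1 h2 => h k h1 (by omega)
    rcases Nat.eq_zero_or_pos T with rfl | hT
    · simp
    · nlinarith [h T hT (by omega), (Nat.cast_pos.mpr hT : (0 : ℝ) < T)]

section StepSizes

theorem mul_sq_eq_add_of_eq_quadratic_root {ℓ a x : ℝ} (hℓ : 0 < ℓ) (ha : 0 ≤ a)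
    (hx : x = 1 / (2 * ℓ) + √(1 / (4 * ℓ ^ 2) + a / ℓ)) : ℓ * x ^ 2 = x + a := by
  have hr := Real.sq_sqrt (by positivity : 0 ≤ 1 / (4 * ℓ ^ 2) + a / ℓ)
  generalize √(1 / (4 * ℓ ^ 2) + a / ℓ) = R at hr hx
  subst hx
  field_simp at hr ⊢
  linear_combination hr

theorem inv_two_sqrt_le_sqrt_sub_sqrt {ℓ a η : ℝ} (hℓ : 0 < ℓ) (hη : 0 < η) (ha : 0 ≤ a)
    (h : η * (η * ℓ - 1) = a) : 1 / (2 * √ℓ) ≤ √(η ^ 2 * ℓ) - √a := by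
  have hb : √(η ^ 2 * ℓ) = η * √ℓ := by rw [Real.sqrt_mul (sq_nonneg η), Real.sqrt_sq hη.le]
  have hsa : √a ≤ √(η ^ 2 * ℓ) := Real.sqrt_le_sqrt (by nlinarith)
  have hsl := Real.sqrt_pos.mpr hℓ
  have hprod : (√(η ^ 2 * ℓ) - √a) * (√(η ^ 2 * ℓ) + √a) = η := by
    linear_combination Real.sq_sqrt (by positivity : 0 ≤ η ^ 2 * ℓ) - Real.sq_sqrt ha + h
  rw [div_le_iff₀ (by positivity)]
  nlinarith [Real.sqrt_nonneg a]

variable {T : ℕ} {ℓ η : ℕ → ℝ}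

theorem flag_stepsize_pos (hℓ : ∀ k, 1 ≤ k → k ≤ T → 0 < ℓ k) (h_one : η 1 = 1 / ℓ 1)
    (h_rec : ∀ k, 2 ≤ k → k ≤ T →
      η k = 1 / (2 * ℓ k) + √(1 / (4 * ℓ k ^ 2) + η (k - 1) ^ 2 * ℓ (k - 1) / ℓ k)) :
    ∀ k, 1 ≤ k → k ≤ T → 0 < η k
  | 1, _, hk => by rw [h_one]; exact one_div_pos.mpr (hℓ 1 le_rfl hk)
  | k + 2, _, hk => by
    rw [h_rec (k + 2) (by omega) hk]
    have := hℓ (k + 2) (by omega) hk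
    positivity

theorem flag_stepsize_succ (hℓ : ∀ k, 1 ≤ k → k ≤ T → 0 < ℓ k)
    (h_rec : ∀ k, 2 ≤ k → k ≤ T →
      η k = 1 / (2 * ℓ k) + √(1 / (4 * ℓ k ^ 2) + η (k - 1) ^ 2 * ℓ (k - 1) / ℓ k))
    (k : ℕ) (h1 : 1 ≤ k) (h2 : k < T) :
    η (k + 1) * (η (k + 1) * ℓ (k + 1) - 1) = η k ^ 2 * ℓ k := by
  have := mul_sq_eq_add_of_eq_quadratic_root (a := η k ^ 2 * ℓ k) (hℓ (k + 1) (by omega) h2)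
    (mul_nonneg (sq_nonneg _) (hℓ k h1 h2.le).le) (h_rec (k + 1) (by omega) h2)
  linear_combination this

theorem one_le_stepsize_mul (hℓ : ∀ k, 1 ≤ k → k ≤ T → 0 < ℓ k)
    (hη : ∀ k, 1 ≤ k → k ≤ T → 0 < η k) (h_one : η 1 * ℓ 1 = 1)
    (h_succ : ∀ k, 1 ≤ k → k < T → η (k + 1) * (η (k + 1) * ℓ (k + 1) - 1) = η k ^ 2 * ℓ k) :
    ∀ k, 1 ≤ k → k ≤ T → 1 ≤ η k * ℓ k
  | 1, _, _ => h_one.ge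
  | k + 2, _, hk => by
    have hprev : 0 ≤ η (k + 2) * (η (k + 2) * ℓ (k + 2) - 1) := by
      rw [h_succ (k + 1) (by omega) hk]
      exact mul_nonneg (sq_nonneg _) (hℓ (k + 1) (by omega) (by omega)).le
    have := hη (k + 2) (by omega) hk
    nlinarith

theorem sum_inv_two_sqrt_le_sqrt (hT : 1 ≤ T)
    (hℓ : ∀ k, 1 ≤ k → k ≤ T → 0 < ℓ k) (hη : ∀ k, 1 ≤ k → k ≤ T → 0 < η k)
    (h_one : η 1 * ℓ 1 = 1)
    (h_succ : ∀ k, 1 ≤ k → k < T → η (k + 1) * (η (k + 1) * ℓ (k + 1) - 1) = η k ^ 2 * ℓ k) :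
    ∑ k ∈ Icc 1 T, 1 / (2 * √(ℓ k)) ≤ √(η T ^ 2 * ℓ T) := by
  induction T, hT using Nat.le_induction with
  | base =>
    have := inv_two_sqrt_le_sqrt_sub_sqrt (hℓ 1 le_rfl le_rfl) (hη 1 le_rfl le_rfl) le_rfl
      (by rw [h_one, sub_self, mul_zero])
    simpa using this
  | succ T hT ih =>
    have ih := ih (fun k h1 _ => hℓ k h1 (by omega)) (fun k h1 _ => hη k h1 (by omega))
      (fun k h1 _ => h_succ k h1 (by omega))
    have := inv_two_sqrt_le_sqrt_sub_sqrt (hℓ (T + 1) (by omega) le_rfl)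
      (hη (T + 1) (by omega) le_rfl) (mul_nonneg (sq_nonneg _) (hℓ T hT (by omega)).le)
      (h_succ T hT (by omega))
    rw [sum_Icc_succ_top (by omega)]
    linarith

theorem card_pow_three_le_sum_mul_sq_sum_inv_sqrt {α : Type*} (s : Finset α) {w : α → ℝ}
    (hw : ∀ i ∈ s, 0 < w i) : (#s : ℝ) ^ 3 ≤ (∑ i ∈ s, w i) * (∑ i ∈ s, 1 / √(w i)) ^ 2 := by
  have hcs₁ : (#s : ℝ) ^ 2 ≤ (∑ i ∈ s, √(w i)) * ∑ i ∈ s, 1 / √(w i) := by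
    simpa using sum_sq_le_sum_mul_sum_of_sq_le_mul s (r := fun _ => (1 : ℝ))
      (fun i _ => Real.sqrt_nonneg (w i)) (fun i _ => by positivity) fun i hi => by
        rw [mul_inv_cancel₀ (Real.sqrt_pos.mpr (hw i hi)).ne']; norm_num
  have hcs₂ : (∑ i ∈ s, √(w i)) ^ 2 ≤ #s * ∑ i ∈ s, w i := by
    have := sq_sum_le_card_mul_sum_sq (s := s) (f := fun i => √(w i))
    rwa [sum_congr rfl fun i hi => Real.sq_sqrt (hw i hi).le] at this
  have hW : 0 ≤ ∑ i ∈ s, w i := sum_nonneg fun i hi => (hw i hi).le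
  have h4 : (#s : ℝ) * (#s : ℝ) ^ 3 ≤ #s * ((∑ i ∈ s, w i) * (∑ i ∈ s, 1 / √(w i)) ^ 2) :=
    calc (#s : ℝ) * (#s : ℝ) ^ 3 = ((#s : ℝ) ^ 2) ^ 2 := by ring
      _ ≤ ((∑ i ∈ s, √(w i)) * ∑ i ∈ s, 1 / √(w i)) ^ 2 :=
          pow_le_pow_left₀ (by positivity) hcs₁ 2
      _ = (∑ i ∈ s, √(w i)) ^ 2 * (∑ i ∈ s, 1 / √(w i)) ^ 2 := by ring
      _ ≤ #s * (∑ i ∈ s, w i) * (∑ i ∈ s, 1 / √(w i)) ^ 2 := by gcongr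
      _ = _ := by ring
  rcases (Nat.cast_nonneg (α := ℝ) #s).eq_or_lt with h0 | hpos
  · rw [← h0, zero_pow three_ne_zero]; positivity
  · exact le_of_mul_le_mul_left h4 hpos

theorem pow_three_le_four_mul_sum_mul_weight (hT : 1 ≤ T)
    (hℓ : ∀ k, 1 ≤ k → k ≤ T → 0 < ℓ k) (hη : ∀ k, 1 ≤ k → k ≤ T → 0 < η k)
    (h_one : η 1 * ℓ 1 = 1)
    (h_succ : ∀ k, 1 ≤ k → k < T → η (k + 1) * (η (k + 1) * ℓ (k + 1) - 1) = η k ^ 2 * ℓ k) :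
    (T : ℝ) ^ 3 ≤ 4 * (∑ k ∈ Icc 1 T, ℓ k) * (η T ^ 2 * ℓ T) := by
  have hℓ' : ∀ k ∈ Icc 1 T, 0 < ℓ k := fun k hk => hℓ k (mem_Icc.mp hk).1 (mem_Icc.mp hk).2
  have hcs := card_pow_three_le_sum_mul_sq_sum_inv_sqrt (Icc 1 T) hℓ'
  rw [Nat.card_Icc, Nat.add_sub_cancel] at hcs
  have hA : 0 ≤ η T ^ 2 * ℓ T := mul_nonneg (sq_nonneg _) (hℓ T hT le_rfl).le
  have hsq : (∑ k ∈ Icc 1 T, 1 / √(ℓ k)) ^ 2 ≤ 4 * (η T ^ 2 * ℓ T) := by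
    have hsum := sum_inv_two_sqrt_le_sqrt hT hℓ hη h_one h_succ
    have hS : 0 ≤ ∑ k ∈ Icc 1 T, 1 / (2 * √(ℓ k)) := sum_nonneg fun k _ => by positivity
    have hinv : ∑ k ∈ Icc 1 T, 1 / √(ℓ k) = 2 * ∑ k ∈ Icc 1 T, 1 / (2 * √(ℓ k)) := by
      rw [mul_sum]; exact sum_congr rfl fun k _ => by field_simp
    rw [hinv, mul_pow, ← Real.sq_sqrt hA]
    nlinarith [pow_le_pow_left₀ hS hsum 2]
  have hℓsum : 0 ≤ ∑ k ∈ Icc 1 T, ℓ k := sum_nonneg fun k hk => (hℓ' k hk).le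
  nlinarith [mul_le_mul_of_nonneg_left hsq hℓsum]

end StepSizes

section Adagrad

theorem div_sqrt_add_le_two_mul_sqrt_sub {a b δ : ℝ} (ha : 0 ≤ a) (hb : 0 ≤ b) (hδ : 0 ≤ δ) :
    a / (√(b + a) + δ) ≤ 2 * (√(b + a) - √b) := by
  rcases ha.eq_or_lt with rfl | ha
  · simp
  have hs := Real.sqrt_pos.mpr (by linarith : 0 < b + a)
  have hsb : √b ≤ √(b + a) := Real.sqrt_le_sqrt (by linarith)
  have hprod : (√(b + a) - √b) * (√(b + a) + √b) = a := by
    linear_combination Real.sq_sqrt (by linarith : 0 ≤ b + a) - Real.sq_sqrt hb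
  rw [div_le_iff₀ (by positivity)]
  nlinarith [Real.sqrt_nonneg b]

theorem sum_div_sqrt_partial_sum_add_le {a : ℕ → ℝ} (ha : ∀ k, 0 ≤ a k) {δ : ℝ} (hδ : 0 ≤ δ)
    (T : ℕ) :
    ∑ k ∈ Icc 1 T, a k / (√(∑ j ∈ Icc 1 k, a j) + δ) ≤ 2 * √(∑ j ∈ Icc 1 T, a j) := by
  induction T with
  | zero => simp
  | succ T ih =>
    rw [sum_Icc_succ_top (by omega), sum_Icc_succ_top (by omega)]
    have := div_sqrt_add_le_two_mul_sqrt_sub (ha (T + 1))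
      (sum_nonneg fun j _ => ha j : 0 ≤ ∑ j ∈ Icc 1 T, a j) hδ
    linarith

variable {ι : Type*} [Fintype ι] {T : ℕ} {g : ℕ → EuclideanSpace ℝ ι} {s : ℕ → ι → ℝ}

theorem sum_local_smoothness_le {L δ : ℝ} {ℓ : ℕ → ℝ} (hT : 1 ≤ T) (hL : 0 ≤ L) (hδ : 0 ≤ δ)
    (hs : ∀ k, 1 ≤ k → k ≤ T → ∀ i, s k i = √(∑ j ∈ Icc 1 k, g j i ^ 2))
    (hℓ : ∀ k, 1 ≤ k → k ≤ T → ℓ k = L * ∑ i, g k i ^ 2 / (s k i + δ)) :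
    ∑ k ∈ Icc 1 T, ℓ k ≤ 2 * L * ∑ i, s T i := by
  calc ∑ k ∈ Icc 1 T, ℓ k
      = L * ∑ i, ∑ k ∈ Icc 1 T, g k i ^ 2 / (√(∑ j ∈ Icc 1 k, g j i ^ 2) + δ) := by
        rw [sum_comm, mul_sum]
        refine sum_congr rfl fun k hk => ?_
        obtain ⟨h1, h2⟩ := mem_Icc.mp hk
        simp only [hℓ k h1 h2, hs k h1 h2]
    _ ≤ L * ∑ i, 2 * √(∑ j ∈ Icc 1 T, g j i ^ 2) := by
        gcongr with i
        exact sum_div_sqrt_partial_sum_add_le (fun k => sq_nonneg _) hδ T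
    _ = 2 * L * ∑ i, s T i := by
        simp only [hs T hT le_rfl, ← mul_sum]; ring

theorem le_sq_sum_and_sq_sum_le_card_mul (hT : 1 ≤ T)
    (hs : ∀ k, 1 ≤ k → k ≤ T → ∀ i, s k i = √(∑ j ∈ Icc 1 k, g j i ^ 2))
    (hg : ∀ k, 1 ≤ k → k ≤ T → ∑ i, g k i ^ 2 = 1) :
    (T : ℝ) ≤ (∑ i, s T i) ^ 2 ∧ (∑ i, s T i) ^ 2 ≤ Fintype.card ι * T := by
  have hs_sq : ∑ i, s T i ^ 2 = T :=
    calc ∑ i, s T i ^ 2 = ∑ i, ∑ k ∈ Icc 1 T, g k i ^ 2 :=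
          sum_congr rfl fun i _ => by rw [hs T hT le_rfl i, Real.sq_sqrt (by positivity)]
      _ = ∑ k ∈ Icc 1 T, (1 : ℝ) := by
          rw [sum_comm]; exact sum_congr rfl fun k hk => hg k (mem_Icc.mp hk).1 (mem_Icc.mp hk).2
      _ = T := by simp
  refine ⟨hs_sq ▸ sum_sq_le_sq_sum_of_nonneg fun i _ => ?_, ?_⟩
  · rw [hs T hT le_rfl i]; positivity
  · simpa [hs_sq] using sq_sum_le_card_mul_sum_sq (s := univ) (f := s T)

end Adagrad

section Flag

variable {ι : Type*} [Fintype ι]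

theorem flag_iteration_le {C : Set (EuclideanSpace ℝ ι)} (hC : Convex ℝ C)
    {f h F : EuclideanSpace ℝ ι → ℝ} {f' : EuclideanSpace ℝ ι → EuclideanSpace ℝ ι}
    {L δ η ℓ ε : ℝ} (hf : ConvexOn ℝ C f) (hh : ConvexOn ℝ C h)
    (hfg : ∀ v, HasGradientAt f (f' v) v)
    (hLip : ∀ a ∈ C, ∀ b ∈ C, ‖f' a - f' b‖ ≤ L * ‖a - b‖) (hF : ∀ v, F v = f v + h v)
    (hL : 0 < L) (hδ : 0 < δ) {x y y' z z' p u : EuclideanSpace ℝ ι} {s : ι → ℝ}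
    (hx : x ∈ C) (hy : y ∈ C) (hu : u ∈ C)
    (hprox : y' ∈ C ∧ ∀ w ∈ C, h y' + ⟪f' x, y' - x⟫ + L / 2 * ‖y' - x‖ ^ 2
      ≤ h w + ⟪f' x, w - x⟫ + L / 2 * ‖w - x‖ ^ 2)
    (hp : p = -L • (y' - x)) (hpne : p ≠ 0) (hs : ∀ i, 0 ≤ s i)
    (hℓ : ℓ = L * ∑ i, (‖p‖⁻¹ • p) i ^ 2 / (s i + δ)) (hη : 0 < η) (hηℓ : 1 ≤ η * ℓ)
    (hmirror : z' ∈ C ∧ ∀ w ∈ C, ⟪η • p, z' - z⟫ + 1 / 2 * ∑ i, (s i + δ) * (z' i - z i) ^ 2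
      ≤ ⟪η • p, w - z⟫ + 1 / 2 * ∑ i, (s i + δ) * (w i - z i) ^ 2)
    (hbs : ⟪p, x - z⟫ ≤ (η * ℓ - 1) * ⟪p, y - x⟫ + ε * (η * ℓ)) :
    η ^ 2 * ℓ * (F y' - F u) ≤ η * (η * ℓ - 1) * (F y - F u) + ε * (η ^ 2 * ℓ)
      + 1 / 2 * ∑ i, (s i + δ) * (u i - z i) ^ 2
      - 1 / 2 * ∑ i, (s i + δ) * (u i - z' i) ^ 2 := by
  have hprox_step : ∀ w ∈ C, F y' ≤ F w - ⟪p, w - x⟫ - ‖p‖ ^ 2 / (2 * L) := fun w hw => by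
    rw [hF, hF]
    exact prox_grad_step_le hC hf hh hfg hLip hL hx hprox.1 hw hprox.2 hp
  have hmirror_step := mirror_step_le hC (fun i => s i + δ) (fun i => by linarith [hs i])
    hmirror.1 hu hmirror.2
  rw [sum_sq_smul_div_eq hpne, real_inner_smul_left] at hmirror_step
  refine weighted_gap_step hη hηℓ (hprox_step u hu) (hprox_step y hy) ?_ hbs
  rw [hℓ]
  field_simp at hmirror_step ⊢
  linarith

theorem flag_potential_bound {T : ℕ} (hT : 1 ≤ T) {C : Set (EuclideanSpace ℝ ι)}
    (hC : Convex ℝ C) {D L δ : ℝ} (hD : ∀ a ∈ C, ∀ b ∈ C, ∀ i, (a i - b i) ^ 2 ≤ D)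
    {f h F : EuclideanSpace ℝ ι → ℝ} {f' : EuclideanSpace ℝ ι → EuclideanSpace ℝ ι}
    (hf : ConvexOn ℝ C f) (hh : ConvexOn ℝ C h) (hfg : ∀ v, HasGradientAt f (f' v) v)
    (hLip : ∀ a ∈ C, ∀ b ∈ C, ‖f' a - f' b‖ ≤ L * ‖a - b‖) (hF : ∀ v, F v = f v + h v)
    (hL : 0 < L) (hδ : 0 < δ) {x y z p g : ℕ → EuclideanSpace ℝ ι} {s : ℕ → ι → ℝ}
    {Lk η : ℕ → ℝ} {u : EuclideanSpace ℝ ι} (hu : u ∈ C)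
    (hinit : x 1 = y 1 ∧ y 1 = z 1) (hxC : ∀ k, 1 ≤ k → k ≤ T → x k ∈ C)
    (hproxstep : ∀ k, 1 ≤ k → k ≤ T → y (k + 1) ∈ C ∧ ∀ w ∈ C,
      h (y (k + 1)) + ⟪f' (x k), y (k + 1) - x k⟫ + L / 2 * ‖y (k + 1) - x k‖ ^ 2
        ≤ h w + ⟪f' (x k), w - x k⟫ + L / 2 * ‖w - x k‖ ^ 2)
    (hp : ∀ k, 1 ≤ k → k ≤ T → p k = -L • (y (k + 1) - x k))
    (hpne : ∀ k, 1 ≤ k → k ≤ T → p k ≠ 0)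
    (hg : ∀ k, 1 ≤ k → k ≤ T → g k = ‖p k‖⁻¹ • p k)
    (hs : ∀ k, 1 ≤ k → k ≤ T → ∀ i, s k i = √(∑ j ∈ Icc 1 k, g j i ^ 2))
    (hLk : ∀ k, 1 ≤ k → k ≤ T → Lk k = L * ∑ i, g k i ^ 2 / (s k i + δ))
    (hLk_pos : ∀ k, 1 ≤ k → k ≤ T → 0 < Lk k)
    (hη : ∀ k, 1 ≤ k → k ≤ T → 0 < η k) (hη_one : η 1 * Lk 1 = 1)
    (hη_succ : ∀ k, 1 ≤ k → k < T → η (k + 1) * (η (k + 1) * Lk (k + 1) - 1) = η k ^ 2 * Lk k)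
    (hmirror : ∀ k, 1 ≤ k → k ≤ T → z (k + 1) ∈ C ∧ ∀ w ∈ C,
      ⟪η k • p k, z (k + 1) - z k⟫ + 1 / 2 * ∑ i, (s k i + δ) * (z (k + 1) i - z k i) ^ 2
        ≤ ⟪η k • p k, w - z k⟫ + 1 / 2 * ∑ i, (s k i + δ) * (w i - z k i) ^ 2)
    (hbs : ∀ k, 1 ≤ k → k ≤ T →
      ⟪p k, x k - z k⟫ ≤ (η k * Lk k - 1) * ⟪p k, y k - x k⟫
        + D * L * (η k * Lk k) / (T : ℝ) ^ 3) :
    η T ^ 2 * Lk T * (F (y (T + 1)) - F u)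
      ≤ D * L / (T : ℝ) ^ 3 * ∑ k ∈ Icc 1 T, η k ^ 2 * Lk k
        + 1 / 2 * D * ∑ i, (s T i + δ) := by
  have hyC : ∀ k, 1 ≤ k → k ≤ T → y k ∈ C
    | 1, _, _ => hinit.1 ▸ hxC 1 le_rfl hT
    | k + 2, _, _ => (hproxstep (k + 1) (by omega) (by omega)).1
  have hzC : ∀ k, 1 ≤ k → k ≤ T + 1 → z k ∈ C
    | 1, _, _ => hinit.2 ▸ hinit.1 ▸ hxC 1 le_rfl hT
    | k + 2, _, _ => (hmirror (k + 1) (by omega) (by omega)).1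
  have hs_nonneg : ∀ k, 1 ≤ k → k ≤ T → ∀ i, 0 ≤ s k i := fun k h1 h2 i => by
    rw [hs k h1 h2 i]; exact Real.sqrt_nonneg _
  have hs_succ : ∀ k, 1 ≤ k → k < T → ∀ i, s k i ≤ s (k + 1) i := fun k h1 h2 i => by
    rw [hs k h1 h2.le i, hs (k + 1) (by omega) h2 i, sum_Icc_succ_top (by omega)]
    exact Real.sqrt_le_sqrt (le_add_of_nonneg_right (sq_nonneg _))
  have hηℓ := one_le_stepsize_mul hLk_pos hη hη_one hη_succ
  have htel := potential_telescope hT (a := fun k => η k ^ 2 * Lk k)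
    (a' := fun k => η k * (η k * Lk k - 1)) (E := fun k => F (y (k + 1)) - F u)
    (Φ := fun k => 1 / 2 * ∑ i, (s k i + δ) * (u i - z k i) ^ 2)
    (Φ' := fun k => 1 / 2 * ∑ i, (s k i + δ) * (u i - z (k + 1) i) ^ 2)
    (B := fun k => 1 / 2 * D * ∑ i, (s k i + δ)) (ε := D * L / (T : ℝ) ^ 3)
    (by simp [hη_one]) hη_succ ?step ?base ?bridge
  case step =>
    intro k h1 h2
    have := flag_iteration_le (ε := D * L / (T : ℝ) ^ 3) hC hf hh hfg hLip hF hL hδ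
      (hxC k h1 h2) (hyC k h1 h2) hu (hproxstep k h1 h2) (hp k h1 h2) (hpne k h1 h2)
      (hs_nonneg k h1 h2) (hg k h1 h2 ▸ hLk k h1 h2) (hη k h1 h2) (hηℓ k h1 h2)
      (hmirror k h1 h2) ((hbs k h1 h2).trans_eq (by ring))
    simpa [Nat.sub_add_cancel h1] using this
  case base =>
    have := sum_mul_sub_sum_mul_le (c := 0) (c' := fun i => s 1 i + δ)
      (fun i => by simp only [Pi.zero_apply]; linarith [hs_nonneg 1 le_rfl hT i])
      fun i => hD u hu (z 1) (hzC 1 le_rfl (by omega)) i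
    simp only [Pi.zero_apply, zero_mul, sum_const_zero, mul_zero, sub_zero] at this
    linarith
  case bridge =>
    intro k h1 h2
    have := sum_mul_sub_sum_mul_le (c := fun i => s k i + δ) (c' := fun i => s (k + 1) i + δ)
      (fun i => by linarith [hs_succ k h1 h2 i])
      fun i => hD u hu (z (k + 1)) (hzC (k + 1) (by omega) (by omega)) i
    linarith
  have hΦ'_nonneg : 0 ≤ 1 / 2 * ∑ i, (s T i + δ) * (u i - z (T + 1) i) ^ 2 :=
    mul_nonneg (by norm_num) (sum_nonneg fun i _ =>
      mul_nonneg (by linarith [hs_nonneg T hT le_rfl i]) (sq_nonneg _))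
  linarith

end Flag

theorem flag_rate_of_weight_bound {A E q L D T : ℝ} (hA : 0 < A) (hT : 1 ≤ T) (hL : 0 < L)
    (hD : 0 ≤ D) (hq : T ≤ q ^ 2) (hq0 : 0 ≤ q) (hweight : T ^ 3 ≤ 8 * L * q * A)
    (hgap : A * E ≤ D * L / T ^ 3 * (T * A) + 1 / 2 * D * (q + 1)) :
    E ≤ 2001 * q ^ 2 * L * D / T ^ 3 := by
  have hq1 : 1 ≤ q := by nlinarith
  have hT0 : 0 < T := by linarith
  have hE : E ≤ D * L / T ^ 2 + D * q / A := by
    rw [← mul_le_mul_iff_of_pos_left hA]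
    calc A * E ≤ D * L / T ^ 3 * (T * A) + 1 / 2 * D * (q + 1) := hgap
      _ ≤ A * (D * L / T ^ 2) + D * q := by
        rw [show D * L / T ^ 3 * (T * A) = A * (D * L / T ^ 2) by field_simp]
        nlinarith
      _ = A * (D * L / T ^ 2 + D * q / A) := by field_simp
  have h1 : D * L / T ^ 2 ≤ q ^ 2 * L * D / T ^ 3 := by
    rw [div_le_div_iff₀ (by positivity) (by positivity)]
    nlinarith [mul_le_mul_of_nonneg_left hq (by positivity : 0 ≤ D * L * T ^ 2)]
  have h2 : D * q / A ≤ 8 * (q ^ 2 * L * D / T ^ 3) := by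
    rw [div_le_iff₀ hA, mul_div_assoc', div_mul_eq_mul_div, le_div_iff₀ (by positivity)]
    nlinarith [mul_le_mul_of_nonneg_left hweight (by positivity : 0 ≤ D * q)]
  have h3 : 0 ≤ q ^ 2 * L * D / T ^ 3 := by positivity
  rw [mul_assoc, mul_assoc, mul_div_assoc, ← mul_assoc (q ^ 2)]
  linarith

theorem flag_main_theorem_general
    {d : ℕ} (T : ℕ) (hT : 1 ≤ T)
    (C : Set (EuclideanSpace ℝ (Fin d)))
    (hCconv : Convex ℝ C)
    (D L δ : ℝ) (hL : 0 < L) (hδ : 0 < δ) (hD0 : 0 ≤ D)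
    (hD : ∀ a ∈ C, ∀ b ∈ C, ∀ i : Fin d, (a i - b i) ^ 2 ≤ D)
    (f h : EuclideanSpace ℝ (Fin d) → ℝ)
    (f' : EuclideanSpace ℝ (Fin d) → EuclideanSpace ℝ (Fin d))
    (hfconv : ConvexOn ℝ Set.univ f) (hhconv : ConvexOn ℝ Set.univ h)
    (hfdiff : ∀ v, HasGradientAt f (f' v) v)
    (hflip : ∀ a ∈ C, ∀ b ∈ C, ‖f' a - f' b‖ ≤ L * ‖a - b‖)
    (F : EuclideanSpace ℝ (Fin d) → ℝ) (hF : ∀ v, F v = f v + h v)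
    (x y z p g : ℕ → EuclideanSpace ℝ (Fin d))
    (s : ℕ → Fin d → ℝ) (Lk η : ℕ → ℝ)
    (hinit : x 1 = y 1 ∧ y 1 = z 1)
    (hxC : ∀ k, 1 ≤ k → k ≤ T → x k ∈ C)
    -- `y (k+1) = prox (x k)`: it is the minimizer over `C` of the prox objective at `x k`
    (hproxstep : ∀ k, 1 ≤ k → k ≤ T → y (k + 1) ∈ C ∧ ∀ w ∈ C,
      h (y (k + 1)) + ⟪f' (x k), y (k + 1) - x k⟫ + L / 2 * ‖y (k + 1) - x k‖ ^ 2
        ≤ h w + ⟪f' (x k), w - x k⟫ + L / 2 * ‖w - x k‖ ^ 2)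
    (hp : ∀ k, 1 ≤ k → k ≤ T → p k = -L • (y (k + 1) - x k))
    (hpne : ∀ k, 1 ≤ k → k ≤ T → p k ≠ 0)
    (hg : ∀ k, 1 ≤ k → k ≤ T → g k = ‖p k‖⁻¹ • p k)
    (hs : ∀ k, 1 ≤ k → k ≤ T → ∀ i : Fin d,
      s k i = Real.sqrt (∑ j ∈ Finset.Icc 1 k, g j i ^ 2))
    -- `L_k = L · g_kᵀ S_k⁻¹ g_k` with `S_k = diag(s_k) + δ I`
    (hLk : ∀ k, 1 ≤ k → k ≤ T → Lk k = L * ∑ i : Fin d, g k i ^ 2 / (s k i + δ))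
    (hη1 : η 1 = 1 / Lk 1)
    (hηk : ∀ k, 2 ≤ k → k ≤ T →
      η k = 1 / (2 * Lk k)
        + Real.sqrt (1 / (4 * Lk k ^ 2) + η (k - 1) ^ 2 * Lk (k - 1) / Lk k))
    -- mirror-descent step: `z (k+1)` minimizes `⟨η_k p_k, z − z_k⟩ + ½‖z − z_k‖²_{S_k}`
    (hmirror : ∀ k, 1 ≤ k → k ≤ T → z (k + 1) ∈ C ∧ ∀ w ∈ C,
      ⟪η k • p k, z (k + 1) - z k⟫
          + 1 / 2 * ∑ i : Fin d, (s k i + δ) * (z (k + 1) i - z k i) ^ 2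
        ≤ ⟪η k • p k, w - z k⟫
          + 1 / 2 * ∑ i : Fin d, (s k i + δ) * (w i - z k i) ^ 2)
    -- binary-search guarantee
    (hbs : ∀ k, 1 ≤ k → k ≤ T →
      ⟪p k, x k - z k⟫
        ≤ (η k * Lk k - 1) * ⟪p k, y k - x k⟫
          + D * L * (η k * Lk k) / (T : ℝ) ^ 3)
    (u : EuclideanSpace ℝ (Fin d)) (hu : u ∈ C)
    (hδd : δ ≤ 1 / (d : ℝ))
    (q : ℝ) (hq : q = ∑ i : Fin d, s T i) :
    F (y (T + 1)) - F u ≤ 2001 * q ^ 2 * L * D / (T : ℝ) ^ 3 ∧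
    2001 * q ^ 2 * L * D / (T : ℝ) ^ 3 ≤ 2001 * L * D * d / (T : ℝ) ^ 2 := by
  have hg_unit : ∀ k, 1 ≤ k → k ≤ T → ∑ i, g k i ^ 2 = 1 := fun k h1 h2 => by
    rw [hg k h1 h2]; exact sum_sq_inv_norm_smul_eq_one (hpne k h1 h2)
  have hLk_pos : ∀ k, 1 ≤ k → k ≤ T → 0 < Lk k := fun k h1 h2 => by
    rw [hLk k h1 h2]
    refine mul_pos hL (sum_sq_div_pos (fun i => ?_) (hg_unit k h1 h2))
    rw [hs k h1 h2 i]; positivity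
  have hη_pos := flag_stepsize_pos hLk_pos hη1 hηk
  have hη_one : η 1 * Lk 1 = 1 := by rw [hη1, one_div_mul_cancel (hLk_pos 1 le_rfl hT).ne']
  have hη_succ := flag_stepsize_succ hLk_pos hηk
  have hA_pos := mul_pos (pow_pos (hη_pos T hT le_rfl) 2) (hLk_pos T hT le_rfl)
  obtain ⟨hq_lower, hq_upper⟩ := hq ▸ le_sq_sum_and_sq_sum_le_card_mul hT hs hg_unit
  rw [Fintype.card_fin] at hq_upper
  have hq_nonneg : 0 ≤ q := hq ▸ sum_nonneg fun i _ => by rw [hs T hT le_rfl i]; positivity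
  have hweight := pow_three_le_four_mul_sum_mul_weight hT hLk_pos hη_pos hη_one hη_succ
  have hLsum := hq ▸ sum_local_smoothness_le hT hL.le hδ.le hs hLk
  have hpot := flag_potential_bound hT hCconv hD (hfconv.subset (Set.subset_univ C) hCconv)
    (hhconv.subset (Set.subset_univ C) hCconv) hfdiff hflip hF hL hδ hu hinit hxC hproxstep hp hpne
    hg hs hLk hLk_pos hη_pos hη_one hη_succ hmirror hbs
  have hA_sum := sum_Icc_le_card_mul_of_le_succ (a := fun k => η k ^ 2 * Lk k) (T := T)
    fun k h1 h2 => by have := hη_succ k h1 h2; have := hη_pos (k + 1) (by omega) h2; nlinarith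
  have htrace : ∑ i : Fin d, (s T i + δ) ≤ q + 1 := by
    rw [sum_add_distrib, ← hq, sum_const, card_univ, Fintype.card_fin, nsmul_eq_mul]
    have := mul_le_mul_of_nonneg_left hδd (Nat.cast_nonneg (α := ℝ) d)
    rw [mul_one_div] at this
    linarith [div_self_le_one (d : ℝ)]
  refine ⟨flag_rate_of_weight_bound hA_pos (by exact_mod_cast hT) hL hD0 hq_lower hq_nonneg
    (by nlinarith [mul_le_mul_of_nonneg_right hLsum hA_pos.le]) (hpot.trans (by gcongr)), ?_⟩
  rw [div_le_div_iff₀ (by positivity) (by positivity)]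
  nlinarith [mul_le_mul_of_nonneg_left hq_upper (by positivity : 0 ≤ 2001 * L * D * (T : ℝ) ^ 2)]

/-- **Main Result** (Theorem 1): convergence of FLAG at rate
`O(q_T² L D / T³)`; since `√T ≤ q_T ≤ √(dT)`, the bound is at most
`O(L D d / T²)`. -/
theorem flag_main_theorem
    {d : ℕ} (hd : 1 ≤ d) (T : ℕ) (hT : 1 ≤ T)
    (C : Set (EuclideanSpace ℝ (Fin d)))
    (hCconv : Convex ℝ C) (hCclosed : IsClosed C)
    (D L δ : ℝ) (hL : 0 < L) (hδ : 0 < δ) (hD0 : 0 ≤ D)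
    (hD : ∀ a ∈ C, ∀ b ∈ C, ∀ i : Fin d, (a i - b i) ^ 2 ≤ D)
    (f h : EuclideanSpace ℝ (Fin d) → ℝ)
    (f' : EuclideanSpace ℝ (Fin d) → EuclideanSpace ℝ (Fin d))
    (hfconv : ConvexOn ℝ Set.univ f) (hhconv : ConvexOn ℝ Set.univ h)
    (hfdiff : ∀ v, HasGradientAt f (f' v) v)
    (hflip : ∀ a ∈ C, ∀ b ∈ C, ‖f' a - f' b‖ ≤ L * ‖a - b‖)
    (F : EuclideanSpace ℝ (Fin d) → ℝ) (hF : ∀ v, F v = f v + h v)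
    (x y z p g : ℕ → EuclideanSpace ℝ (Fin d))
    (s : ℕ → Fin d → ℝ) (Lk η : ℕ → ℝ)
    (hinit : x 1 = y 1 ∧ y 1 = z 1)
    (hxC : ∀ k, 1 ≤ k → k ≤ T → x k ∈ C)
    -- `y (k+1) = prox (x k)`: it is the minimizer over `C` of the prox objective at `x k`
    (hproxstep : ∀ k, 1 ≤ k → k ≤ T → y (k + 1) ∈ C ∧ ∀ w ∈ C,
      h (y (k + 1)) + ⟪f' (x k), y (k + 1) - x k⟫ + L / 2 * ‖y (k + 1) - x k‖ ^ 2
        ≤ h w + ⟪f' (x k), w - x k⟫ + L / 2 * ‖w - x k‖ ^ 2)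
    (hp : ∀ k, 1 ≤ k → k ≤ T → p k = -L • (y (k + 1) - x k))
    (hpne : ∀ k, 1 ≤ k → k ≤ T → p k ≠ 0)
    (hg : ∀ k, 1 ≤ k → k ≤ T → g k = ‖p k‖⁻¹ • p k)
    (hs : ∀ k, 1 ≤ k → k ≤ T → ∀ i : Fin d,
      s k i = Real.sqrt (∑ j ∈ Finset.Icc 1 k, g j i ^ 2))
    -- `L_k = L · g_kᵀ S_k⁻¹ g_k` with `S_k = diag(s_k) + δ I`
    (hLk : ∀ k, 1 ≤ k → k ≤ T → Lk k = L * ∑ i : Fin d, g k i ^ 2 / (s k i + δ))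
    (hη1 : η 1 = 1 / Lk 1)
    (hηk : ∀ k, 2 ≤ k → k ≤ T →
      η k = 1 / (2 * Lk k)
        + Real.sqrt (1 / (4 * Lk k ^ 2) + η (k - 1) ^ 2 * Lk (k - 1) / Lk k))
    -- mirror-descent step: `z (k+1)` minimizes `⟨η_k p_k, z − z_k⟩ + ½‖z − z_k‖²_{S_k}`
    (hmirror : ∀ k, 1 ≤ k → k ≤ T → z (k + 1) ∈ C ∧ ∀ w ∈ C,
      ⟪η k • p k, z (k + 1) - z k⟫
          + 1 / 2 * ∑ i : Fin d, (s k i + δ) * (z (k + 1) i - z k i) ^ 2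
        ≤ ⟪η k • p k, w - z k⟫
          + 1 / 2 * ∑ i : Fin d, (s k i + δ) * (w i - z k i) ^ 2)
    -- binary-search guarantee
    (hbs : ∀ k, 1 ≤ k → k ≤ T →
      ⟪p k, x k - z k⟫
        ≤ (η k * Lk k - 1) * ⟪p k, y k - x k⟫
          + D * L * (η k * Lk k) / (T : ℝ) ^ 3)
    (u : EuclideanSpace ℝ (Fin d)) (hu : u ∈ C)
    (hδd : δ ≤ 1 / (d : ℝ))
    (q : ℝ) (hq : q = ∑ i : Fin d, s T i) :
    F (y (T + 1)) - F u ≤ 2001 * q ^ 2 * L * D / (T : ℝ) ^ 3 ∧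
    2001 * q ^ 2 * L * D / (T : ℝ) ^ 3 ≤ 2001 * L * D * d / (T : ℝ) ^ 2 :=
  flag_main_theorem_general T hT C hCconv D L δ hL hδ hD0 hD f h f' hfconv hhconv hfdiff hflip F hF
    x y z p g s Lk η hinit hxC hproxstep hp hpne hg hs hLk hη1 hηk hmirror hbs u hu hδd q hq
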